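/- Let $S_n$ be binomial with parameters $n$ and $p$, and let $T_m$ be binomial with parameters $m$ and $q$, with $S_n$ and $T_m$ independent. Suppose $0 < c' < c$, $d > 0$, and $p \geq cq$. Then the probability that $T_m/m \geq (1/c')(S_n/n) + d/\min(n,m)$ is at most $(c'/c)^{c'd/(c'+1)}$. -/

import Mathlib

/-! Put `K = min(n,m)` and `u = log (c/c') / (c'+1)`. Multiplying the event by `c' K u` and
applying Chernoff's bound with parameter `1`, together with `1 + x ≤ eˣ` for the two binomial
moment generating functions, bounds the probability by
`(c'/c)^(c'd/(c'+1)) · exp (n p (e^{-Ku/n} - 1) + m q (e^{c'Ku/m} - 1))`.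
Since `p ≥ c q`, the exponent is `≤ 0` once `m (e^{c'Ku/m} - 1) ≤ c n (1 - e^{-Ku/n})`.
Convexity of `exp` proves this twice over: `t ↦ t (e^{a/t} - 1)` is antitone, which replaces
`n` and `m` by `K`, and the weighted AM-GM inequality `(c/c')^(c'/(c'+1)) ≤ (1+c)/(1+c')`
gives `e^{c'u} - 1 ≤ c (1 - e^{-u})`. -/

set_option linter.deprecated false

open MeasureTheory ProbabilityTheory Real
open scoped NNReal

lemma Real.exp_mul_le_one_sub_add_mul_exp {θ : ℝ} (h0 : 0 ≤ θ) (h1 : θ ≤ 1) (z : ℝ) :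
    exp (θ * z) ≤ 1 - θ + θ * exp z := by
  have := convexOn_exp.2 (Set.mem_univ z) (Set.mem_univ 0) h0 (sub_nonneg.2 h1) (by ring)
  simp only [smul_eq_mul, mul_zero, add_zero, exp_zero, mul_one] at this
  linarith

lemma Real.mul_exp_div_mul_sub_one_le {K x : ℝ} (hK : 0 < K) (hKx : K ≤ x) (z : ℝ) :
    x * (exp (K / x * z) - 1) ≤ K * (exp z - 1) := by
  have hx : 0 < x := hK.trans_le hKx
  have := exp_mul_le_one_sub_add_mul_exp (div_nonneg hK.le hx.le) ((div_le_one hx).2 hKx) z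
  calc x * (exp (K / x * z) - 1) ≤ x * (K / x * (exp z - 1)) := by gcongr; linarith
    _ = K * (exp z - 1) := by field_simp

lemma Real.exp_mul_sub_one_le_mul_one_sub_exp_neg {c c' : ℝ} (hc' : 0 < c') (hcc : c' < c) :
    exp (c' * (log (c / c') / (c' + 1))) - 1 ≤ c * (1 - exp (-(log (c / c') / (c' + 1)))) := by
  have hc : 0 < c := hc'.trans hcc
  set u := log (c / c') / (c' + 1)
  have hAMGM : exp (c' * u) ≤ (1 + c) / (1 + c') := by
    calc exp (c' * u) = exp (c' / (c' + 1) * log (c / c')) := by simp only [u]; ring_nf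
      _ ≤ 1 - c' / (c' + 1) + c' / (c' + 1) * exp (log (c / c')) :=
        exp_mul_le_one_sub_add_mul_exp (by positivity)
          ((div_le_one (by positivity)).2 (by linarith)) _
      _ = (1 + c) / (1 + c') := by rw [exp_log (by positivity)]; field_simp; ring
  have hneg : c * exp (-u) = c' * exp (c' * u) := by
    have : -u = log (c' / c) + c' * u := by
      simp only [u]
      rw [log_div hc'.ne' hc.ne', log_div hc.ne' hc'.ne']
      field_simp
      ring
    rw [this, exp_add, exp_log (by positivity)]
    field_simp
  rw [le_div_iff₀ (by positivity)] at hAMGM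
  linarith

lemma two_sample_exponent_nonpos {c c' u K n m p q : ℝ} (hc : 0 ≤ c) (hu0 : 0 ≤ u)
    (hu : exp (c' * u) - 1 ≤ c * (1 - exp (-u))) (hq : 0 ≤ q) (hpq : c * q ≤ p) (hK : 0 < K)
    (hKn : K ≤ n) (hKm : K ≤ m) :
    n * p * (exp (-(K / n * u)) - 1) + m * q * (exp (K / m * (c' * u)) - 1) ≤ 0 := by
  have hn := mul_exp_div_mul_sub_one_le hK hKn (-u)
  rw [mul_neg] at hn
  have hkey : m * (exp (K / m * (c' * u)) - 1) ≤ c * (n * (1 - exp (-(K / n * u)))) :=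
    calc m * (exp (K / m * (c' * u)) - 1) ≤ K * (exp (c' * u) - 1) :=
          mul_exp_div_mul_sub_one_le hK hKm _
      _ ≤ K * (c * (1 - exp (-u))) := by gcongr
      _ = c * (K * (1 - exp (-u))) := by ring
      _ ≤ c * (n * (1 - exp (-(K / n * u)))) := mul_le_mul_of_nonneg_left (by linarith) hc
  have hA : 0 ≤ n * (1 - exp (-(K / n * u))) :=
    mul_nonneg (hK.le.trans hKn) (sub_nonneg.2 (exp_le_one_iff.2 (neg_nonpos.2
      (mul_nonneg (div_nonneg hK.le (hK.le.trans hKn)) hu0))))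
  nlinarith [mul_le_mul_of_nonneg_left hkey hq, mul_nonneg (sub_nonneg.2 hpq) hA]

lemma ProbabilityTheory.mgf_prod_add {Ω Ω' : Type*} [MeasurableSpace Ω] [MeasurableSpace Ω']
    {μ : Measure Ω} {ν : Measure Ω'} [SFinite μ] [SFinite ν] (X : Ω → ℝ) (Y : Ω' → ℝ) (t : ℝ) :
    mgf (fun z : Ω × Ω' => X z.1 + Y z.2) (μ.prod ν) t = mgf X μ t * mgf Y ν t := by
  simp only [mgf, mul_add, exp_add]
  exact integral_prod_mul (μ := μ) (ν := ν) (fun x => exp (t * X x)) fun y => exp (t * Y y)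

namespace PMF

lemma mgf_binomial (p : ℝ≥0) (h : p ≤ 1) (n : ℕ) (t : ℝ) :
    mgf (fun i : Fin (n + 1) => ((i : ℕ) : ℝ)) (binomial p h n).toMeasure t
      = (p * exp t + (1 - p)) ^ n := by
  rw [mgf, integral_eq_sum, add_pow, ← Fin.sum_univ_eq_sum_range]
  refine Finset.sum_congr rfl fun i _ => ?_
  simp only [binomial_apply, Fin.val_last, smul_eq_mul, ENNReal.toReal_mul, ENNReal.toReal_pow,
    ENNReal.coe_toReal, ENNReal.toReal_natCast, mul_pow,
    ENNReal.toReal_sub_of_le (ENNReal.coe_le_one_iff.2 h) ENNReal.one_ne_top, ENNReal.toReal_one,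
    ← exp_nat_mul, mul_comm t]
  ring

lemma mgf_binomial_le (p : ℝ≥0) (h : p ≤ 1) (n : ℕ) (t : ℝ) :
    mgf (fun i : Fin (n + 1) => ((i : ℕ) : ℝ)) (binomial p h n).toMeasure t
      ≤ exp (n * p * (exp t - 1)) := by
  have hp : (p : ℝ) ≤ 1 := h
  rw [mgf_binomial, show (n : ℝ) * p * (exp t - 1) = n * (p * (exp t - 1)) by ring, exp_nat_mul]
  gcongr
  linarith [add_one_le_exp (p * (exp t - 1)), mul_sub (p : ℝ) (exp t) 1]

lemma measureReal_binomial_prod_le_exp (p q : ℝ≥0) (hp : p ≤ 1) (hq : q ≤ 1) (n m : ℕ)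
    (a b ε : ℝ) :
    ((binomial p hp n).toMeasure.prod (binomial q hq m).toMeasure).real
      {x | ε ≤ a * ((x.1 : ℕ) : ℝ) + b * ((x.2 : ℕ) : ℝ)}
      ≤ exp (-ε + (n * p * (exp a - 1) + m * q * (exp b - 1))) := by
  calc _ ≤ exp (-1 * ε) * mgf (fun x : Fin (n + 1) × Fin (m + 1) =>
        a * ((x.1 : ℕ) : ℝ) + b * ((x.2 : ℕ) : ℝ))
          ((binomial p hp n).toMeasure.prod (binomial q hq m).toMeasure) 1 :=
        measure_ge_le_exp_mul_mgf ε zero_le_one .of_finite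
    _ = exp (-ε) * (mgf (fun i : Fin (n + 1) => ((i : ℕ) : ℝ)) (binomial p hp n).toMeasure a
          * mgf (fun j : Fin (m + 1) => ((j : ℕ) : ℝ)) (binomial q hq m).toMeasure b) := by
        rw [mgf_prod_add (fun i : Fin (n + 1) => a * ((i : ℕ) : ℝ))
          (fun j : Fin (m + 1) => b * ((j : ℕ) : ℝ)), mgf_const_mul, mgf_const_mul,
          neg_one_mul, mul_one, mul_one]
    _ ≤ exp (-ε) * (exp (n * p * (exp a - 1)) * exp (m * q * (exp b - 1))) := by
        gcongr
        · exact mgf_nonneg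
        · exact mgf_binomial_le p hp n a
        · exact mgf_binomial_le q hq m b
    _ = _ := by rw [← exp_add, ← exp_add]

end PMF

theorem two_sample_binomial_large_deviation_general
    (n m : ℕ) (hn : 0 < n) (hm : 0 < m)
    (p q : ℝ) (hq0 : 0 ≤ q) (hp1 : p ≤ 1) (hq1 : q ≤ 1)
    (c c' d : ℝ) (hc' : 0 < c') (hcc : c' < c) (hpq : c * q ≤ p) :
    ((PMF.binomial (Real.toNNReal p) (Real.toNNReal_le_one.mpr hp1) n).toMeasure.prod
      (PMF.binomial (Real.toNNReal q) (Real.toNNReal_le_one.mpr hq1) m).toMeasure)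
      {x : Fin (n + 1) × Fin (m + 1) |
        (1 / c') * (((x.1 : ℕ) : ℝ) / n) + d / ((min n m : ℕ) : ℝ) ≤ ((x.2 : ℕ) : ℝ) / m}
      ≤ ENNReal.ofReal ((c' / c) ^ (c' * d / (c' + 1))) := by
  have hc : 0 < c := hc'.trans hcc
  have hp0 : 0 ≤ p := (mul_nonneg hc.le hq0).trans hpq
  set K : ℝ := ((min n m : ℕ) : ℝ)
  have hK : 0 < K := Nat.cast_pos.2 (lt_min hn hm)
  set u := log (c / c') / (c' + 1)
  have hu : 0 < u := div_pos (log_pos ((one_lt_div hc').2 hcc)) (by positivity)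
  have hset : {x : Fin (n + 1) × Fin (m + 1) |
      (1 / c') * (((x.1 : ℕ) : ℝ) / n) + d / K ≤ ((x.2 : ℕ) : ℝ) / m} =
      {x | c' * u * d ≤
        -(K / n * u) * ((x.1 : ℕ) : ℝ) + K / m * (c' * u) * ((x.2 : ℕ) : ℝ)} := by
    ext x
    simp only [Set.mem_ofPred_eq]
    constructor <;> intro h <;> field_simp at h ⊢ <;> linarith
  have hexponent := two_sample_exponent_nonpos hc.le hu.le
    (exp_mul_sub_one_le_mul_one_sub_exp_neg hc' hcc) hq0 hpq hK
    (Nat.cast_le.2 (min_le_left n m)) (Nat.cast_le.2 (min_le_right n m))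
  have hrate : c' * u * d = log (c / c') * (c' * d / (c' + 1)) := by simp only [u]; field_simp
  rw [hset, ← ofReal_measureReal]
  refine ENNReal.ofReal_le_ofReal
    ((PMF.measureReal_binomial_prod_le_exp _ _ _ _ n m _ _ _).trans ?_)
  rw [coe_toNNReal p hp0, coe_toNNReal q hq0, rpow_def_of_pos (by positivity), ← inv_div c c',
    log_inv]
  gcongr
  linarith

/-- Two-sample binomial large deviation bound: if `S_n` is binomial `(n, p)` and `T_m` is
binomial `(m, q)`, independent, `0 < c' < c`, `d > 0`, and `p ≥ c q`, then
`P(T_m/m ≥ (1/c')(S_n/n) + d/min(n,m)) ≤ (c'/c)^{c'd/(c'+1)}`. -/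
theorem two_sample_binomial_large_deviation
    (n m : ℕ) (hn : 0 < n) (hm : 0 < m)
    (p q : ℝ) (hq0 : 0 ≤ q) (hp1 : p ≤ 1) (hq1 : q ≤ 1)
    (c c' d : ℝ) (hc' : 0 < c') (hcc : c' < c) (hd : 0 < d) (hpq : c * q ≤ p) :
    ((PMF.binomial (Real.toNNReal p) (Real.toNNReal_le_one.mpr hp1) n).toMeasure.prod
      (PMF.binomial (Real.toNNReal q) (Real.toNNReal_le_one.mpr hq1) m).toMeasure)
      {x : Fin (n + 1) × Fin (m + 1) |
        (1 / c') * (((x.1 : ℕ) : ℝ) / n) + d / ((min n m : ℕ) : ℝ) ≤ ((x.2 : ℕ) : ℝ) / m}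
      ≤ ENNReal.ofReal ((c' / c) ^ (c' * d / (c' + 1))) :=
  two_sample_binomial_large_deviation_general n m hn hm p q hq0 hp1 hq1 c c' d hc' hcc hpq
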